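/- arXiv:1512.09180 — 2 statements merged into one kernel-verified Lean document; each statement's English description precedes it below -/
import Mathlib

section
/- Let τ = (τ_1, ..., τ_T) be a probability vector with mean t̄ = Σ_t t·τ_t, where t̄ ≥ 1. Define L_τ(x) = Σ_{t=1}^T τ_t·L(t, x), and let L(t̄, x) denote the piecewise-affine extension of t ↦ L(t, x) to real t ≥ 1, given by L(t̄, x) = L(⌊t̄⌋, x) + (L(⌈t̄⌉, x) − L(⌊t̄⌋, x))·(t̄ − ⌊t̄⌋). Then for every x ≥ 0, L_τ(x) ≥ L(t̄, x). -/
noncomputable def PsiEq (k : ℕ) (x : ℝ) : ℝ := x ^ k / (Nat.factorial k) * Real.exp (-x)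

noncomputable def PoisL (t : ℕ) (x : ℝ) : ℝ :=
  ∑ k ∈ Finset.range t, PsiEq k x * ((t : ℝ) - (k : ℝ))

/-- Piecewise-affine extension of `t ↦ PoisL t x` to real arguments `s ≥ 1`. -/
noncomputable def PoisLExt (s : ℝ) (x : ℝ) : ℝ :=
  PoisL ⌊s⌋₊ x + (PoisL ⌈s⌉₊ x - PoisL ⌊s⌋₊ x) * (s - ⌊s⌋₊)

lemma psiEq_nonneg (k : ℕ) (x : ℝ) (hx : 0 ≤ x) : 0 ≤ PsiEq k x := by
  unfold PsiEq; positivity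

noncomputable def Pd (t : ℕ) (x : ℝ) : ℝ := ∑ k ∈ Finset.range (t + 1), PsiEq k x

lemma poisL_succ (t : ℕ) (x : ℝ) : PoisL (t + 1) x = PoisL t x + Pd t x := by
  unfold PoisL Pd
  rw [Finset.sum_range_succ, Finset.sum_range_succ]
  push_cast
  have h : ∀ k ∈ Finset.range t, PsiEq k x * ((t:ℝ)+1-k) = PsiEq k x * ((t:ℝ)-k) + PsiEq k x :=
    fun k _ => by ring
  rw [Finset.sum_congr rfl h, Finset.sum_add_distrib]
  ring

lemma pd_mono (x : ℝ) (hx : 0 ≤ x) : Monotone (fun t => Pd t x) := by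
  intro a b hab
  unfold Pd
  exact Finset.sum_le_sum_of_subset_of_nonneg
    (Finset.range_subset_range.2 (by omega))
    (fun k _ _ => psiEq_nonneg k x hx)

lemma chord (x : ℝ) (hx : 0 ≤ x) (n m : ℕ) (hnm : n ≤ m) :
    PoisL m x ≤ PoisL n x + Pd m x * ((m : ℝ) - n) := by
  induction m, hnm using Nat.le_induction with
  | base => simp
  | succ m hnm ih =>
    rw [poisL_succ]
    have hd : Pd m x ≤ Pd (m + 1) x := pd_mono x hx (by omega)
    have hc : (n : ℝ) ≤ m := by exact_mod_cast hnm
    push_cast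
    nlinarith

lemma support_line (x : ℝ) (hx : 0 ≤ x) (m n : ℕ) :
    PoisL m x + Pd m x * ((n : ℝ) - m) ≤ PoisL n x := by
  rcases le_or_gt m n with h | h
  · induction n, h using Nat.le_induction with
    | base => simp
    | succ n hmn ih =>
      rw [poisL_succ]
      have hd : Pd m x ≤ Pd n x := pd_mono x hx hmn
      push_cast
      nlinarith
  · have := chord x hx n m h.le
    linarith
      
theorem stmt_2 (T : ℕ) (τ : Fin T → ℝ) (hτ : ∀ i, 0 ≤ τ i) (hsum : ∑ i, τ i = 1)
    (tbar : ℝ) (htbar : tbar = ∑ i : Fin T, ((i : ℝ) + 1) * τ i) (htbar1 : 1 ≤ tbar)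
    (x : ℝ) (hx : 0 ≤ x) :
    ∑ i : Fin T, τ i * PoisL (i + 1) x ≥ PoisLExt tbar x := by
  set m := ⌊tbar⌋₊ with hm
  have hm1 : (m : ℝ) ≤ tbar := Nat.floor_le (by linarith)
  have hext : PoisLExt tbar x = PoisL m x + Pd m x * (tbar - m) := by
    unfold PoisLExt
    by_cases hc : ⌈tbar⌉₊ = m
    · have hle : tbar ≤ (m : ℝ) := by
        have := Nat.le_ceil tbar
        rw [hc] at this
        exact_mod_cast this
      have heq : tbar = (m : ℝ) := le_antisymm hle hm1
      rw [hc, heq, Nat.floor_natCast]; ring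
    · have hceil : ⌈tbar⌉₊ = m + 1 := by
        have h1 := Nat.ceil_le_floor_add_one tbar
        have h2 := Nat.floor_le_ceil tbar
        omega
      rw [hceil, poisL_succ]; ring
  have key : ∀ i : Fin T, τ i * (PoisL m x + Pd m x * (((i : ℝ) + 1) - m)) ≤
      τ i * PoisL (i + 1) x := by
    intro i
    apply mul_le_mul_of_nonneg_left _ (hτ i)
    have h := support_line x hx m (i + 1)
    push_cast at h ⊢
    linarith
  have expand : ∑ i : Fin T, τ i * (PoisL m x + Pd m x * (((i : ℝ) + 1) - m))
      = PoisL m x * (∑ i, τ i) +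
        Pd m x * ((∑ i : Fin T, ((i : ℝ) + 1) * τ i) - (m : ℝ) * ∑ i, τ i) := by
    have h : ∀ i : Fin T, τ i * (PoisL m x + Pd m x * (((i : ℝ) + 1) - m)) =
        PoisL m x * τ i + Pd m x * (((i : ℝ) + 1) * τ i) - Pd m x * ((m : ℝ) * τ i) :=
      fun i => by ring
    rw [Finset.sum_congr rfl (fun i _ => h i), Finset.sum_sub_distrib, Finset.sum_add_distrib,
      ← Finset.mul_sum, ← Finset.mul_sum, ← Finset.mul_sum, ← Finset.mul_sum]
    ring
  rw [hsum, ← htbar] at expand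
  have hsumle : ∑ i : Fin T, τ i * (PoisL m x + Pd m x * (((i : ℝ) + 1) - m)) ≤
      ∑ i : Fin T, τ i * PoisL (i + 1) x :=
    Finset.sum_le_sum fun i _ => key i
  rw [ge_iff_le, hext]
  rw [expand] at hsumle
  linarith
end

section
/- Let τ be a probability vector on {1, ..., T} with mean t̄ = Σ_t t·τ_t, and let τ_reg be the (semi-)regular distribution with the same mean: if t̄ is an integer, τ_reg puts mass 1 on t̄; otherwise τ_reg puts mass 1 + ⌊t̄⌋ − t̄ on ⌊t̄⌋ and mass t̄ − ⌊t̄⌋ on ⌊t̄⌋+1. Define V_s(x; c, τ) = x²/2 − x + (t̄ − L_τ(c x))/c with L_τ(y) = Σ_t τ_t·L(t, y). Then for every c > 0 and x ∈ [0,1], V_s(x; c, τ) ≤ V_s(x; c, τ_reg). Consequently, the potential threshold c̄_p(τ) = sup{c ≥ 0 : min_{x∈[0,1]} V_s(x; c, τ) ≥ 0} satisfies c̄_p(τ) ≤ c̄_p(τ_reg). -/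
/-- Mixture `L_τ(y) = Σ_{t=1}^T τ_t L(t, y)`, where `τ i` is the mass on `t = i+1`. -/
noncomputable def PoisLMix (T : ℕ) (τ : Fin T → ℝ) (y : ℝ) : ℝ :=
  ∑ i : Fin T, τ i * PoisL (i + 1) y

/-- Potential `V_s(x; c, τ) = x²/2 − x + (t̄ − L_τ(c x))/c`. -/
noncomputable def VsMix (T : ℕ) (τ : Fin T → ℝ) (tbar c x : ℝ) : ℝ :=
  x ^ 2 / 2 - x + (tbar - PoisLMix T τ (c * x)) / c

/-- The (semi-)regular distribution with mean `tbar`, as a mass function on `ℕ`. -/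
noncomputable def tauReg (tbar : ℝ) (t : ℕ) : ℝ :=
  if t = ⌊tbar⌋₊ then 1 + (⌊tbar⌋₊ : ℝ) - tbar
  else if t = ⌊tbar⌋₊ + 1 then tbar - ⌊tbar⌋₊ else 0

/-- `L_{τ_reg}(y)`, the mixture loss under the (semi-)regular distribution. -/
noncomputable def PoisLReg (tbar : ℝ) (y : ℝ) : ℝ :=
  tauReg tbar ⌊tbar⌋₊ * PoisL ⌊tbar⌋₊ y + tauReg tbar (⌊tbar⌋₊ + 1) * PoisL (⌊tbar⌋₊ + 1) y

noncomputable def VsReg (tbar c x : ℝ) : ℝ :=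
  x ^ 2 / 2 - x + (tbar - PoisLReg tbar (c * x)) / c

lemma psi_nonneg {k : ℕ} {y : ℝ} (hy : 0 ≤ y) : 0 ≤ PsiEq k y := by
  unfold PsiEq
  have h1 : (0:ℝ) < Nat.factorial k := by exact_mod_cast Nat.factorial_pos k
  positivity

/-- Increment of `PoisL`: `DD t y = L(t+1,y) − L(t,y)`. -/
noncomputable def DD (t : ℕ) (y : ℝ) : ℝ := ∑ k ∈ Finset.range (t + 1), PsiEq k y

lemma DD_nonneg {t : ℕ} {y : ℝ} (hy : 0 ≤ y) : 0 ≤ DD t y :=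
  Finset.sum_nonneg fun _ _ => psi_nonneg hy

lemma DD_mono {y : ℝ} (hy : 0 ≤ y) {a b : ℕ} (h : a ≤ b) : DD a y ≤ DD b y := by
  apply Finset.sum_le_sum_of_subset_of_nonneg
  · exact Finset.range_subset_range.2 (by omega)
  · exact fun _ _ _ => psi_nonneg hy

lemma PoisL_nonneg {t : ℕ} {y : ℝ} (hy : 0 ≤ y) : 0 ≤ PoisL t y := by
  unfold PoisL
  apply Finset.sum_nonneg
  intro k hk
  have : (k : ℝ) ≤ (t : ℝ) := by
    have := Finset.mem_range.1 hk; exact_mod_cast this.le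
  exact mul_nonneg (psi_nonneg hy) (by linarith)

lemma PoisL_step (t : ℕ) (y : ℝ) : PoisL (t + 1) y = PoisL t y + DD t y := by
  unfold PoisL DD
  have h1 : ∑ k ∈ Finset.range (t+1), PsiEq k y * (((t:ℕ)+1 : ℝ) - k)
      = ∑ k ∈ Finset.range (t+1), (PsiEq k y * ((t:ℝ) - k) + PsiEq k y) := by
    apply Finset.sum_congr rfl
    intro k _; ring
  push_cast
  rw [h1, Finset.sum_add_distrib, Finset.sum_range_succ (f := fun k => PsiEq k y * ((t:ℝ) - k))]
  simp

/-- supporting line from below, right side -/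
lemma PoisL_up (y : ℝ) (hy : 0 ≤ y) (a j : ℕ) :
    PoisL a y + (j : ℝ) * DD a y ≤ PoisL (a + j) y := by
  induction j with
  | zero => simp
  | succ n ih =>
      have hs := PoisL_step (a + n) y
      have hm : DD a y ≤ DD (a + n) y := DD_mono hy (by omega)
      have : a + (n + 1) = (a + n) + 1 := by omega
      rw [this, hs]
      push_cast
      linarith

/-- slopes to the left are smaller -/
lemma PoisL_down (y : ℝ) (hy : 0 ≤ y) (a j : ℕ) :
    PoisL (a + j) y ≤ PoisL a y + (j : ℝ) * DD (a + j) y := by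
  induction j with
  | zero => simp
  | succ n ih =>
      have hs := PoisL_step (a + n) y
      have hm : DD (a + n) y ≤ DD (a + (n + 1)) y := DD_mono hy (by omega)
      have hD : 0 ≤ DD (a + n) y := DD_nonneg hy
      have heq : a + (n + 1) = (a + n) + 1 := by omega
      rw [heq] at hm
      rw [heq, hs]
      push_cast
      nlinarith [mul_le_mul_of_nonneg_left hm (by positivity : (0:ℝ) ≤ (n:ℝ) + 1)]

lemma PoisL_support (y : ℝ) (hy : 0 ≤ y) (m n : ℕ) :
    PoisL m y + ((n : ℝ) - m) * DD m y ≤ PoisL n y := by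
  rcases le_or_gt m n with h | h
  · obtain ⟨j, rfl⟩ := Nat.exists_eq_add_of_le h
    have := PoisL_up y hy m j
    push_cast
    push_cast at this
    linarith
  · obtain ⟨j, rfl⟩ := Nat.exists_eq_add_of_le h.le
    have := PoisL_down y hy n j
    push_cast
    push_cast at this
    linarith

lemma PoisLReg_eq (tbar y : ℝ) :
    PoisLReg tbar y = PoisL ⌊tbar⌋₊ y + (tbar - (⌊tbar⌋₊ : ℝ)) * DD ⌊tbar⌋₊ y := by
  unfold PoisLReg tauReg
  rw [if_pos rfl, if_neg (by omega), if_pos rfl, PoisL_step]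
  ring

theorem stmt_14 (T : ℕ) (τ : Fin T → ℝ) (hτ : ∀ i, 0 ≤ τ i) (hsum : ∑ i, τ i = 1)
    (tbar : ℝ) (htbar : tbar = ∑ i : Fin T, ((i : ℝ) + 1) * τ i) (htbar1 : 1 ≤ tbar) :
    (∀ c : ℝ, 0 < c → ∀ x ∈ Set.Icc (0 : ℝ) 1, VsMix T τ tbar c x ≤ VsReg tbar c x) ∧
    sSup {c : ℝ | 0 ≤ c ∧ ∀ x ∈ Set.Icc (0 : ℝ) 1, 0 ≤ VsMix T τ tbar c x} ≤
      sSup {c : ℝ | 0 ≤ c ∧ ∀ x ∈ Set.Icc (0 : ℝ) 1, 0 ≤ VsReg tbar c x} := by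
  set m := ⌊tbar⌋₊ with hm
  have htb0 : (0:ℝ) ≤ tbar := by linarith
  -- key: for y ≥ 0, PoisLReg tbar y ≤ PoisLMix T τ y
  have key : ∀ y : ℝ, 0 ≤ y → PoisLReg tbar y ≤ PoisLMix T τ y := by
    intro y hy
    rw [PoisLReg_eq]
    unfold PoisLMix
    have h1 : ∀ i : Fin T,
        τ i * (PoisL m y + (((i:ℝ) + 1) - m) * DD m y) ≤ τ i * PoisL (i + 1) y := by
      intro i
      apply mul_le_mul_of_nonneg_left _ (hτ i)
      have := PoisL_support y hy m (i + 1)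
      push_cast at this ⊢
      linarith
    calc PoisL m y + (tbar - (m:ℝ)) * DD m y
        = ∑ i : Fin T, τ i * (PoisL m y + (((i:ℝ) + 1) - m) * DD m y) := by
          rw [htbar]
          rw [Finset.sum_congr rfl (fun i _ => by ring :
            ∀ i ∈ Finset.univ, τ i * (PoisL m y + (((i:ℝ) + 1) - m) * DD m y)
              = τ i * (PoisL m y - (m:ℝ) * DD m y) + (((i:ℝ)+1) * τ i) * DD m y)]
          rw [Finset.sum_add_distrib, ← Finset.sum_mul, hsum, ← Finset.sum_mul]
          ring
      _ ≤ ∑ i : Fin T, τ i * PoisL (i + 1) y := Finset.sum_le_sum fun i _ => h1 i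
  have part1 : ∀ c : ℝ, 0 < c → ∀ x ∈ Set.Icc (0 : ℝ) 1, VsMix T τ tbar c x ≤ VsReg tbar c x := by
    intro c hc x hx
    unfold VsMix VsReg
    have hy : 0 ≤ c * x := mul_nonneg hc.le hx.1
    have := key (c * x) hy
    have : (tbar - PoisLMix T τ (c * x)) / c ≤ (tbar - PoisLReg tbar (c * x)) / c := by
      gcongr
    linarith
  refine ⟨part1, ?_⟩
  set Smix := {c : ℝ | 0 ≤ c ∧ ∀ x ∈ Set.Icc (0 : ℝ) 1, 0 ≤ VsMix T τ tbar c x}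
  set Sreg := {c : ℝ | 0 ≤ c ∧ ∀ x ∈ Set.Icc (0 : ℝ) 1, 0 ≤ VsReg tbar c x}
  have hsub : Smix ⊆ Sreg := by
    intro c hc
    refine ⟨hc.1, fun x hx => ?_⟩
    rcases eq_or_lt_of_le hc.1 with h0 | hpos
    · -- c = 0 : the divisions are both 0
      have h0' : c = 0 := h0.symm
      have := hc.2 x hx
      unfold VsReg
      unfold VsMix at this
      rw [h0'] at this ⊢
      simpa using this
    · exact le_trans (hc.2 x hx) (part1 c hpos x hx)
  -- Sreg is bounded above by 2 * tbar
  have hbdd : BddAbove Sreg := by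
    refine ⟨2 * tbar, fun c hc => ?_⟩
    by_contra hlt
    push_neg at hlt
    have hc2 : 0 < c := by linarith
    have h1 : (1:ℝ) ∈ Set.Icc (0:ℝ) 1 := by constructor <;> norm_num
    have hV := hc.2 1 h1
    unfold VsReg at hV
    rw [mul_one] at hV
    have hL : 0 ≤ PoisLReg tbar c := by
      rw [PoisLReg_eq]
      have h2 : (m:ℝ) ≤ tbar := Nat.floor_le htb0
      have := PoisL_nonneg (t := m) (y := c) (by linarith)
      have := DD_nonneg (t := m) (y := c) (by linarith)
      nlinarith
    have : (tbar - PoisLReg tbar c) / c ≤ tbar / c := by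
      gcongr
      linarith
    have htc : tbar / c < 1 / 2 := by
      rw [div_lt_div_iff₀ hc2 (by norm_num)]
      linarith
    norm_num at hV
    linarith
  rcases Set.eq_empty_or_nonempty Smix with he | hne
  · rw [he, Real.sSup_empty]
    exact Real.sSup_nonneg fun c hc => hc.1
  · exact csSup_le_csSup hbdd hne hsub
end
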